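/- arXiv:2603.12414 — 2 statements merged into one kernel-verified Lean document; each statement's English description precedes it below -/
import Mathlib

section
/- Let Ā be a d×d complex matrix that is diagonalizable, Ā = V D V⁻¹ with V invertible and D diagonal, with spectral radius ρ = ρ(Ā) satisfying 0 < ρ < 1, and set κ = ‖V‖₂ ‖V⁻¹‖₂. Let B be a d×m complex matrix such that the Controllability Gramian W_c = Σ_{k=0}^{∞} Āᵏ B Bᴴ (Āᴴ)ᵏ exists (the series is summable), and suppose its largest eigenvalue λ_max(W_c) is strictly positive. Let h₀ ∈ ℂᵈ be nonzero and let ε > 0. Then for every natural number t such that ‖Āᵗ h₀‖₂² / λ_max(W_c) ≥ ε², one has t ≤ log( κ · √( ‖h₀‖₂² / (ε² · λ_max(W_c)) ) ) / log(1/ρ). -/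
open Matrix

/-- Spectral radius of a complex square matrix: max of |λ| over eigenvalues. -/
noncomputable def specRad {d : ℕ} (M : Matrix (Fin d) (Fin d) ℂ) : ℝ :=
  sSup ((fun z : ℂ => ‖z‖) '' spectrum ℂ M)

/-- Euclidean (ℓ²) norm of a complex vector. -/
noncomputable def eNorm {d : ℕ} (v : Fin d → ℂ) : ℝ :=
  ‖(WithLp.equiv 2 (Fin d → ℂ)).symm v‖

/-- The ℓ²→ℓ² operator norm of a complex matrix. -/
noncomputable def opNorm {d m : ℕ} (M : Matrix (Fin d) (Fin m) ℂ) : ℝ :=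
  ‖LinearMap.toContinuousLinearMap (Matrix.toEuclideanLin M)‖

/-!
Writing `Ā = V D V⁻¹`, the entries of `D` are the eigenvalues of `Ā`, so `‖Dᵗ‖₂ ≤ ρᵗ` and
`‖Āᵗ h₀‖₂ ≤ κ ρᵗ ‖h₀‖₂`. The hypothesis on `t` then reads `ε √λ_max ≤ κ ρᵗ ‖h₀‖₂`, i.e.
`(1/ρ)ᵗ ≤ κ ‖h₀‖₂ / (ε √λ_max)`, and taking logarithms gives the bound since `log (1/ρ) > 0`.
-/

open scoped Matrix.Norms.L2Operator

namespace Matrix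

variable {n : Type*} [Fintype n] [DecidableEq n]

lemma spectrum_conj_eq_range_diag {𝕜 : Type*} [Field 𝕜] {V D : Matrix n n 𝕜}
    (hV : IsUnit V) (hD : D.IsDiag) : spectrum 𝕜 (V * D * V⁻¹) = Set.range D.diag := by
  obtain ⟨u, rfl⟩ := hV
  rw [← coe_units_inv, spectrum.units_conjugate, ← spectrum_diagonal, hD.diagonal_diag]

variable {𝕜 : Type*} [RCLike 𝕜]

lemma l2_opNorm_pow_le_of_isDiag {D : Matrix n n 𝕜} (hD : D.IsDiag) {r : ℝ} (hr : 0 ≤ r)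
    (hDr : ∀ i, ‖D i i‖ ≤ r) (t : ℕ) : ‖D ^ t‖ ≤ r ^ t := by
  rw [← hD.diagonal_diag, diagonal_pow, l2_opNorm_diagonal,
    pi_norm_le_iff_of_nonneg (pow_nonneg hr t)]
  intro i
  rw [Pi.pow_apply, norm_pow]
  exact pow_le_pow_left₀ (norm_nonneg _) (hDr i) t

lemma l2_opNorm_conj_le (V M : Matrix n n 𝕜) : ‖V * M * V⁻¹‖ ≤ ‖V‖ * ‖V⁻¹‖ * ‖M‖ :=
  calc ‖V * M * V⁻¹‖ ≤ ‖V‖ * ‖M‖ * ‖V⁻¹‖ :=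
        (l2_opNorm_mul _ _).trans (by gcongr; exact l2_opNorm_mul _ _)
    _ = ‖V‖ * ‖V⁻¹‖ * ‖M‖ := by ring

end Matrix

lemma specRad_nonneg {d : ℕ} (M : Matrix (Fin d) (Fin d) ℂ) : 0 ≤ specRad M :=
  Real.sSup_nonneg fun _ ⟨_, _, hz⟩ => hz ▸ norm_nonneg _

lemma norm_le_specRad {d : ℕ} {M : Matrix (Fin d) (Fin d) ℂ} {z : ℂ} (hz : z ∈ spectrum ℂ M) :
    ‖z‖ ≤ specRad M :=
  le_csSup (M.finite_spectrum.image _).bddAbove ⟨z, hz, rfl⟩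

lemma eNorm_mulVec_le {d m : ℕ} (M : Matrix (Fin d) (Fin m) ℂ) (x : Fin m → ℂ) :
    eNorm (M *ᵥ x) ≤ opNorm M * eNorm x :=
  M.l2_opNorm_mulVec (WithLp.toLp 2 x)

lemma opNorm_pow_le_of_eq_conj {d : ℕ} {A V D : Matrix (Fin d) (Fin d) ℂ} (hV : IsUnit V)
    (hD : D.IsDiag) (hA : A = V * D * V⁻¹) (t : ℕ) :
    opNorm (A ^ t) ≤ opNorm V * opNorm V⁻¹ * specRad A ^ t := by
  have hDρ : ∀ i, ‖D i i‖ ≤ specRad A := fun i =>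
    norm_le_specRad (by rw [hA, spectrum_conj_eq_range_diag hV hD]; exact ⟨i, rfl⟩)
  obtain ⟨u, rfl⟩ := hV
  have hpow : A ^ t = u * D ^ t * (u : Matrix (Fin d) (Fin d) ℂ)⁻¹ := by
    rw [hA, ← coe_units_inv, Units.conj_pow]
  rw [hpow]
  exact (l2_opNorm_conj_le _ _).trans <| mul_le_mul_of_nonneg_left
    (l2_opNorm_pow_le_of_isDiag hD (specRad_nonneg A) hDρ t) (by positivity)

lemma le_log_div_log_inv_of_sq_le {ρ κ h ε μ : ℝ} {t : ℕ} (hρ0 : 0 < ρ) (hρ1 : ρ < 1)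
    (hκ : 0 ≤ κ) (hh : 0 ≤ h) (hε : 0 < ε) (hμ : 0 < μ) (ht : ε ^ 2 ≤ (κ * ρ ^ t * h) ^ 2 / μ) :
    (t : ℝ) ≤ Real.log (κ * Real.sqrt (h ^ 2 / (ε ^ 2 * μ))) / Real.log (1 / ρ) := by
  have hεμ : 0 < ε * Real.sqrt μ := mul_pos hε (Real.sqrt_pos.mpr hμ)
  have hsq : ε * Real.sqrt μ ≤ κ * ρ ^ t * h := by
    refine (pow_le_pow_iff_left₀ hεμ.le (by positivity) two_ne_zero).mp ?_
    rwa [mul_pow, Real.sq_sqrt hμ.le, ← le_div_iff₀ hμ]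
  have hpow : (1 / ρ) ^ t ≤ κ * Real.sqrt (h ^ 2 / (ε ^ 2 * μ)) := by
    rw [Real.sqrt_div (sq_nonneg _), Real.sqrt_sq hh, Real.sqrt_mul (sq_nonneg _),
      Real.sqrt_sq hε.le, div_pow, one_pow, div_le_iff₀ (pow_pos hρ0 t), ← mul_div_assoc,
      div_mul_eq_mul_div, le_div_iff₀ hεμ]
    linarith
  rw [le_div_iff₀ (Real.log_pos (one_lt_one_div hρ0 hρ1)), ← Real.log_pow]
  exact Real.log_le_log (pow_pos (one_div_pos.mpr hρ0) t) hpow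

theorem spectral_horizon_bound_general
    {d : ℕ} (Abar V D : Matrix (Fin d) (Fin d) ℂ)
    (hV : IsUnit V) (hD : D.IsDiag) (hA : Abar = V * D * V⁻¹)
    (hrho0 : 0 < specRad Abar) (hrho1 : specRad Abar < 1)
    (W : Matrix (Fin d) (Fin d) ℂ)
    (hW : W.IsHermitian)
    (hlam : 0 < ⨆ i, hW.eigenvalues i)
    (h0 : Fin d → ℂ) (ε : ℝ) (hε : 0 < ε)
    (t : ℕ)
    (ht : ε ^ 2 ≤ eNorm ((Abar ^ t) *ᵥ h0) ^ 2 / (⨆ i, hW.eigenvalues i)) :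
    (t : ℝ) ≤
      Real.log ((opNorm V * opNorm V⁻¹) *
          Real.sqrt (eNorm h0 ^ 2 / (ε ^ 2 * ⨆ i, hW.eigenvalues i))) /
        Real.log (1 / specRad Abar) := by
  have hdecay : eNorm (Abar ^ t *ᵥ h0) ≤ opNorm V * opNorm V⁻¹ * specRad Abar ^ t * eNorm h0 :=
    (eNorm_mulVec_le _ _).trans <|
      mul_le_mul_of_nonneg_right (opNorm_pow_le_of_eq_conj hV hD hA t) (norm_nonneg _)
  have hκ : 0 ≤ opNorm V * opNorm V⁻¹ := by unfold opNorm; positivity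
  exact le_log_div_log_inv_of_sq_le hrho0 hrho1 hκ (norm_nonneg _) hε hlam
    (ht.trans (by gcongr; exact norm_nonneg _))

/-- **Spectral Horizon Bound.** For a diagonalizable `Ā = V D V⁻¹` with spectral
radius `0 < ρ < 1`, condition number `κ = ‖V‖₂‖V⁻¹‖₂`, and Controllability
Gramian `W_c = Σ_{k=0}^∞ Āᵏ B Bᴴ (Āᴴ)ᵏ` with `λ_max(W_c) > 0`, any time `t` at
which the signal-to-noise ratio `‖Āᵗ h₀‖₂² / λ_max(W_c)` still exceeds `ε²`
satisfies `t ≤ log(κ √(‖h₀‖₂² / (ε² λ_max(W_c)))) / log(1/ρ)`. -/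
theorem spectral_horizon_bound
    {d m : ℕ} (Abar V D : Matrix (Fin d) (Fin d) ℂ)
    (hV : IsUnit V) (hD : D.IsDiag) (hA : Abar = V * D * V⁻¹)
    (hrho0 : 0 < specRad Abar) (hrho1 : specRad Abar < 1)
    (B : Matrix (Fin d) (Fin m) ℂ)
    (hsum : Summable (fun k : ℕ => Abar ^ k * B * Bᴴ * (Abarᴴ) ^ k))
    (W : Matrix (Fin d) (Fin d) ℂ)
    (hWdef : W = ∑' k : ℕ, Abar ^ k * B * Bᴴ * (Abarᴴ) ^ k)
    (hW : W.IsHermitian)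
    (hlam : 0 < ⨆ i, hW.eigenvalues i)
    (h0 : Fin d → ℂ) (hh0 : h0 ≠ 0) (ε : ℝ) (hε : 0 < ε)
    (t : ℕ)
    (ht : ε ^ 2 ≤ eNorm ((Abar ^ t) *ᵥ h0) ^ 2 / (⨆ i, hW.eigenvalues i)) :
    (t : ℝ) ≤
      Real.log ((opNorm V * opNorm V⁻¹) *
          Real.sqrt (eNorm h0 ^ 2 / (ε ^ 2 * ⨆ i, hW.eigenvalues i))) /
        Real.log (1 / specRad Abar) :=
  spectral_horizon_bound_general Abar V D hV hD hA hrho0 hrho1 W hW hlam h0 ε hε t ht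
end

section
/- Let A be a d×d complex matrix with d ≥ 1, let Δ_max > 0, and define Φ(Δ) = exp(Δ·A). Then for all Δ₁, Δ₂ ∈ [0, Δ_max], | ρ(Φ(Δ₁)) − ρ(Φ(Δ₂)) | ≤ L_A · |Δ₁ − Δ₂|, where L_A = ‖A‖₂ · exp(Δ_max · ‖A‖₂). That is, the map Δ ↦ ρ(exp(Δ·A)) is Lipschitz on [0, Δ_max] with Lipschitz constant ‖A‖₂ · exp(Δ_max ‖A‖₂). -/
open Matrix

/-!
The spectrum of `exp M` is `exp` of the spectrum of `M`: `spectrum.exp_mem_exp` gives one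
inclusion, and for the other, `M` commutes with `exp M`, so it preserves each eigenspace of
`exp M` and has an eigenvector `v` there; then `exp M v = exp c • v` forces the eigenvalue to be
`exp c`. Hence `ρ(exp (Δ • A))` is the supremum over `λ ∈ spectrum A` of `exp (Δ * Re λ)`.
Since `|Re λ| ≤ ‖A‖₂`, the mean value theorem makes each `Δ ↦ exp (Δ * Re λ)` Lipschitz on
`[0, Δmax]` with constant `‖A‖₂ * exp (Δmax * ‖A‖₂)`, and a supremum of functions that are
Lipschitz with a common constant is Lipschitz with that constant.
-/

open NormedSpace Set Pointwise

theorem NormedSpace.exp_mul_of_mul_eq_smul {𝕂 𝔸 : Type*} [RCLike 𝕂] [NormedRing 𝔸]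
    [NormedAlgebra 𝕂 𝔸] [CompleteSpace 𝔸] {a x : 𝔸} {μ : 𝕂} (h : a * x = μ • x) :
    exp a * x = exp μ • x := by
  let : NormedAlgebra ℚ 𝔸 := NormedAlgebra.restrictScalars ℚ 𝕂 𝔸
  have hsemi : SemiconjBy x (algebraMap 𝕂 𝔸 μ) a := by
    rw [SemiconjBy, ← Algebra.commutes, ← Algebra.smul_def, h]
  rw [Algebra.smul_def, Algebra.commutes, algebraMap_exp_comm]
  exact hsemi.exp_right.symm

theorem Module.End.exists_hasEigenvector_mem_eigenspace_of_commute {K V : Type*} [Field K]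
    [IsAlgClosed K] [AddCommGroup V] [Module K V] [FiniteDimensional K V] {f g : End K V}
    (hfg : Commute f g) {μ : K} (hμ : f.HasEigenvalue μ) :
    ∃ c v, g.HasEigenvector c v ∧ v ∈ f.eigenspace μ := by
  have : Nontrivial (f.eigenspace μ) := Submodule.nontrivial_iff_ne_bot.mpr hμ
  obtain ⟨c, hc⟩ := exists_eigenvalue (g.restrict (mapsTo_genEigenspace_of_comm hfg μ 1))
  obtain ⟨w, hw⟩ := hc.exists_hasEigenvector
  refine ⟨c, w, ⟨mem_eigenspace_iff.mpr (congr_arg Subtype.val hw.apply_eq_smul), ?_⟩, w.2⟩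
  exact_mod_cast hw.2

namespace Matrix

open scoped Matrix.Norms.L2Operator

variable {n : Type*} [Fintype n] [DecidableEq n]

theorem exp_mulVec_of_mulVec_eq_smul {M : Matrix n n ℂ} {v : n → ℂ} {μ : ℂ}
    (h : M *ᵥ v = μ • v) : exp M *ᵥ v = Complex.exp μ • v := by
  have hcols : M * vecMulVec v (1 : n → ℂ) = μ • vecMulVec v 1 := by
    rw [mul_vecMulVec, h, smul_vecMulVec]
  have hexp := exp_mul_of_mul_eq_smul hcols
  rw [mul_vecMulVec, ← Complex.exp_eq_exp_ℂ, ← smul_vecMulVec] at hexp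
  funext i
  simpa using congr_fun (congr_fun hexp i) i

theorem spectrum_exp (M : Matrix n n ℂ) :
    spectrum ℂ (exp M) = Complex.exp '' spectrum ℂ M := by
  apply subset_antisymm
  · intro μ hμ
    rw [← spectrum_toLin', ← Module.End.hasEigenvalue_iff_mem_spectrum] at hμ
    have hcomm : Commute (toLin' (exp M)) (toLin' M) :=
      (Commute.refl M).exp_left.map toLinAlgEquiv'
    obtain ⟨c, v, hv, hμv⟩ :=
      Module.End.exists_hasEigenvector_mem_eigenspace_of_commute hcomm hμ
    refine ⟨c, ?_, ?_⟩
    · rw [← spectrum_toLin', ← Module.End.hasEigenvalue_iff_mem_spectrum]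
      exact Module.End.hasEigenvalue_of_hasEigenvector hv
    · have hMv : M *ᵥ v = c • v := by simpa using hv.apply_eq_smul
      have hexp : exp M *ᵥ v = μ • v := by simpa using Module.End.mem_eigenspace_iff.mp hμv
      rw [exp_mulVec_of_mulVec_eq_smul hMv] at hexp
      exact smul_left_injective ℂ hv.2 hexp
  · rintro _ ⟨c, hc, rfl⟩
    rw [Complex.exp_eq_exp_ℂ]
    exact spectrum.exp_mem_exp M hc

theorem spectrum_nonempty [Nonempty n] (A : Matrix n n ℂ) : (spectrum ℂ A).Nonempty :=
  spectrum.nonempty A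

theorem isCompact_spectrum (A : Matrix n n ℂ) : IsCompact (spectrum ℂ A) :=
  spectrum.isCompact A

theorem spectrum_real_smul [Nonempty n] (Δ : ℝ) (A : Matrix n n ℂ) :
    spectrum ℂ (Δ • A) = (Δ : ℂ) • spectrum ℂ A := by
  rw [RCLike.real_smul_eq_coe_smul (K := ℂ)]
  exact spectrum.smul_eq_smul _ A (spectrum_nonempty A)

theorem norm_le_opNorm_of_mem_spectrum {d : ℕ} [Nonempty (Fin d)]
    {A : Matrix (Fin d) (Fin d) ℂ} {μ : ℂ} (hμ : μ ∈ spectrum ℂ A) : ‖μ‖ ≤ opNorm A :=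
  calc ‖μ‖ ≤ ‖A‖ := spectrum.norm_le_norm_of_mem hμ
    _ = opNorm A := l2_opNorm_def A

end Matrix

theorem specRad_exp_smul {d : ℕ} [Nonempty (Fin d)] (A : Matrix (Fin d) (Fin d) ℂ) (Δ : ℝ) :
    specRad (exp (Δ • A)) = sSup ((fun z : ℂ => Real.exp (Δ * z.re)) '' spectrum ℂ A) := by
  rw [specRad, Matrix.spectrum_exp, Matrix.spectrum_real_smul, ← image_smul, image_image,
    image_image]
  simp only [smul_eq_mul, Complex.norm_exp, Complex.re_ofReal_mul]

section SupremumOfImage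

variable {α : Type*} {S : Set α} {f g : α → ℝ} {C : ℝ}

theorem csSup_image_le_csSup_image_add (hS : S.Nonempty) (hg : BddAbove (g '' S))
    (h : ∀ z ∈ S, f z ≤ g z + C) : sSup (f '' S) ≤ sSup (g '' S) + C :=
  csSup_le (hS.image f) <| forall_mem_image.2 fun z hz =>
    (h z hz).trans (add_le_add_left (le_csSup hg (mem_image_of_mem g hz)) C)

theorem abs_csSup_image_sub_csSup_image_le (hS : S.Nonempty) (hf : BddAbove (f '' S))
    (hg : BddAbove (g '' S)) (h : ∀ z ∈ S, |f z - g z| ≤ C) :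
    |sSup (f '' S) - sSup (g '' S)| ≤ C := by
  have hfg := csSup_image_le_csSup_image_add (f := f) hS hg fun z hz =>
    by linarith [(abs_le.1 (h z hz)).2]
  have hgf := csSup_image_le_csSup_image_add (f := g) hS hf fun z hz =>
    by linarith [(abs_le.1 (h z hz)).1]
  rw [abs_sub_le_iff]
  constructor <;> linarith

end SupremumOfImage

theorem abs_exp_mul_sub_exp_mul_le {c R T s t : ℝ} (hc : |c| ≤ R) (hs : s ∈ Icc 0 T)
    (ht : t ∈ Icc 0 T) :
    |Real.exp (s * c) - Real.exp (t * c)| ≤ R * Real.exp (T * R) * |s - t| := by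
  have hderiv : ∀ x ∈ Icc 0 T,
      HasDerivWithinAt (fun x => Real.exp (x * c)) (Real.exp (x * c) * c) (Icc 0 T) x :=
    fun x _ => (hasDerivAt_mul_const c).exp.hasDerivWithinAt
  have hbound : ∀ x ∈ Icc 0 T, ‖Real.exp (x * c) * c‖ ≤ R * Real.exp (T * R) := by
    intro x hx
    have hxc : x * c ≤ T * R := by nlinarith [le_abs_self c, abs_nonneg c, hx.1, hx.2]
    rw [norm_mul, Real.norm_eq_abs, Real.abs_exp, Real.norm_eq_abs, mul_comm]
    exact mul_le_mul hc (Real.exp_le_exp.2 hxc) (Real.exp_pos _).le ((abs_nonneg c).trans hc)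
  simpa only [Real.norm_eq_abs] using
    (convex_Icc 0 T).norm_image_sub_le_of_norm_hasDerivWithin_le hderiv hbound ht hs

theorem specRad_exp_smul_lipschitz_general
    {d : ℕ} (hd : 1 ≤ d) (A : Matrix (Fin d) (Fin d) ℂ) (Δmax : ℝ)
    (Δ₁ Δ₂ : ℝ) (h1 : Δ₁ ∈ Set.Icc 0 Δmax) (h2 : Δ₂ ∈ Set.Icc 0 Δmax) :
    |specRad (NormedSpace.exp (Δ₁ • A)) - specRad (NormedSpace.exp (Δ₂ • A))| ≤
      (opNorm A * Real.exp (Δmax * opNorm A)) * |Δ₁ - Δ₂| := by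
  have : Nonempty (Fin d) := ⟨⟨0, hd⟩⟩
  have hbdd (Δ : ℝ) : BddAbove ((fun z : ℂ => Real.exp (Δ * z.re)) '' spectrum ℂ A) :=
    ((Matrix.isCompact_spectrum A).image (by fun_prop)).bddAbove
  rw [specRad_exp_smul, specRad_exp_smul]
  refine abs_csSup_image_sub_csSup_image_le (Matrix.spectrum_nonempty A) (hbdd Δ₁) (hbdd Δ₂)
    fun z hz => abs_exp_mul_sub_exp_mul_le ?_ h1 h2
  exact (Complex.abs_re_le_norm z).trans (Matrix.norm_le_opNorm_of_mem_spectrum hz)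

/-- **Lipschitz continuity of the spectral radius under discretization.**
The map `Δ ↦ ρ(exp(Δ·A))` is Lipschitz on `[0, Δ_max]` with constant
`L_A = ‖A‖₂ · exp(Δ_max‖A‖₂)`. -/
theorem specRad_exp_smul_lipschitz
    {d : ℕ} (hd : 1 ≤ d) (A : Matrix (Fin d) (Fin d) ℂ) (Δmax : ℝ) (hΔmax : 0 < Δmax)
    (Δ₁ Δ₂ : ℝ) (h1 : Δ₁ ∈ Set.Icc 0 Δmax) (h2 : Δ₂ ∈ Set.Icc 0 Δmax) :
    |specRad (NormedSpace.exp (Δ₁ • A)) - specRad (NormedSpace.exp (Δ₂ • A))| ≤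
      (opNorm A * Real.exp (Δmax * opNorm A)) * |Δ₁ - Δ₂| :=
  specRad_exp_smul_lipschitz_general hd A Δmax Δ₁ Δ₂ h1 h2
end
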